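/- Every homeomorphism of the plane ℂ onto itself is either positively oriented or negatively oriented; in particular, an orientation-preserving homeomorphism h satisfies: for every simple closed curve S and every point w ∈ h(T(S)) \ h(S), the winding number of h restricted to S about w is positive. -/

import Mathlib

open Set

/-- The topological hull of a set `S ⊂ ℂ`. -/
def topHull (S : Set ℂ) : Set ℂ :=
  S ∪ {z | z ∉ S ∧ Bornology.IsBounded (connectedComponentIn Sᶜ z)}

/-- A parameterized simple closed curve in the plane. -/
def JordanLoop (γ : ℝ → ℂ) : Prop :=
  Continuous γ ∧ Function.Periodic γ 1 ∧ Set.InjOn γ (Set.Ico 0 1)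

/-- Winding number of a nonvanishing `1`-periodic loop about the origin. -/
def HasWindingNumber (u : ℝ → ℂ) (n : ℤ) : Prop :=
  Continuous u ∧ Function.Periodic u 1 ∧ (∀ t, u t ≠ 0) ∧
    ∃ θ : ℝ → ℝ, Continuous θ ∧
      (∀ t, u t = (‖u t‖ : ℂ) * Complex.exp (2 * Real.pi * Complex.I * θ t)) ∧
      θ 1 - θ 0 = n

/-- A positively oriented parameterization of a simple closed curve: it winds once
counterclockwise about every point it encloses. -/
def PosParam (γ : ℝ → ℂ) : Prop :=
  JordanLoop γ ∧ ∀ w ∈ topHull (Set.range γ) \ Set.range γ,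
    HasWindingNumber (fun t => γ t - w) 1

/-- `win(f, S, w)`: the winding number of `f ∘ γ` about `w`. -/
def Win (f : ℂ → ℂ) (γ : ℝ → ℂ) (w : ℂ) (n : ℤ) : Prop :=
  HasWindingNumber (fun t => f (γ t) - w) n

/-- `f` is positively oriented. -/
def PositivelyOriented (f : ℂ → ℂ) : Prop :=
  ∀ γ : ℝ → ℂ, PosParam γ → ∀ w ∈ f '' topHull (Set.range γ) \ f '' Set.range γ,
    ∀ n : ℤ, Win f γ w n → 0 < n

/-- `f` is negatively oriented. -/
def NegativelyOriented (f : ℂ → ℂ) : Prop :=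
  ∀ γ : ℝ → ℂ, PosParam γ → ∀ w ∈ f '' topHull (Set.range γ) \ f '' Set.range γ,
    ∀ n : ℤ, Win f γ w n → n < 0

/-! Winding numbers can be read off continuous logarithms, which exist for every map from a
simply connected space to `ℂ \ {0}` because `exp` is a covering map; this makes them invariant
under homotopies through nonvanishing loops. If `γ` winds once around `z`, interpolating
`log (γ - z)` with `2πit` deforms `γ` into the unit circle about `z` without crossing `z`, so
`h ∘ γ` winds around `h z` as often as the image of that circle does. Translating the circle
shows this number `ε` is the same for every centre, and `ε ≠ 0`: otherwise the same argument
for `h⁻¹` would give the unit circle winding number `0` around its centre. -/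

open Complex Function
open scoped Real

theorem exists_continuous_exp_eq {A : Type*} [TopologicalSpace A] [SimplyConnectedSpace A]
    [LocallyPathConnectedSpace A] {u : A → ℂ} (hu : Continuous u) (hne : ∀ a, u a ≠ 0) :
    ∃ L : A → ℂ, Continuous L ∧ ∀ a, exp (L a) = u a := by
  obtain ⟨a₀⟩ : Nonempty A := inferInstance
  obtain ⟨L, ⟨-, hL⟩, -⟩ := isCoveringMapOn_exp.existsUnique_continuousMap_lifts ⟨u, hu⟩
    (a₀ := a₀) (exp_log (hne a₀)) hne
  exact ⟨L, L.continuous, congrFun hL⟩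

theorem sub_eq_sub_of_exp_eq {A : Type*} [TopologicalSpace A] [PreconnectedSpace A]
    {L L' : A → ℂ} (hL : Continuous L) (hL' : Continuous L')
    (h : ∀ a, exp (L a) = exp (L' a)) (a b : A) : L a - L' a = L b - L' b := by
  refine isPreconnected_univ.constant_of_mapsTo
    (isDiscrete_iff_discreteTopology.mpr
      (NormedSpace.discreteTopology_zmultiples (2 * π * I)))
    (hL.sub hL').continuousOn (fun x _ => ?_) trivial trivial
  obtain ⟨n, hn⟩ := exp_eq_exp_iff_exists_int.mp (h x)
  exact ⟨n, by simp [hn]⟩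

theorem exp_eq_norm_mul_exp_im (z : ℂ) :
    exp z = (‖exp z‖ : ℂ) * exp (2 * π * I * ((z.im / (2 * π) : ℝ) : ℂ)) := by
  have hπ : (π : ℂ) ≠ 0 := ofReal_ne_zero.mpr Real.pi_ne_zero
  rw [norm_exp, ofReal_exp, ← exp_add]
  congr 1
  push_cast
  field_simp
  conv_lhs => rw [← re_add_im z]
  ring

theorem hasWindingNumber_iff_of_exp_eq {u L : ℝ → ℂ} (hup : Periodic u 1) (hL : Continuous L)
    (hexp : ∀ t, exp (L t) = u t) {n : ℤ} :
    HasWindingNumber u n ↔ L 1 - L 0 = 2 * π * I * n := by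
  have hne : ∀ t, u t ≠ 0 := fun t => hexp t ▸ exp_ne_zero _
  have huc : Continuous u := continuous_exp.comp hL |>.congr hexp
  constructor
  · rintro ⟨-, -, -, θ, hθc, hθ, hθn⟩
    set L' : ℝ → ℂ := fun t => (Real.log ‖u t‖ : ℂ) + 2 * π * I * θ t
    have hL' : Continuous L' := by
      have : Continuous fun t => Real.log ‖u t‖ :=
        (continuous_norm.comp huc).log fun t => norm_ne_zero_iff.mpr (hne t)
      fun_prop
    have hexp' : ∀ t, exp (L t) = exp (L' t) := fun t => by
      rw [hexp, exp_add, ← ofReal_exp, Real.exp_log (norm_pos_iff.mpr (hne t)), ← hθ]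
    have := sub_eq_sub_of_exp_eq hL hL' hexp' 1 0
    have hu10 : u 1 = u 0 := by simpa using hup 0
    simp only [L', hu10] at this
    have hθn' : (θ 1 : ℂ) - θ 0 = n := by exact_mod_cast hθn
    linear_combination this + 2 * π * I * hθn'
  · intro hn
    refine ⟨huc, hup, hne, fun t => (L t).im / (2 * π), by fun_prop, fun t => ?_, ?_⟩
    · rw [← hexp]
      exact exp_eq_norm_mul_exp_im _
    · have hπ : π ≠ 0 := Real.pi_ne_zero
      have him : (L 1).im - (L 0).im = 2 * π * n := by simpa using congrArg im hn
      field_simp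
      linarith

theorem exists_hasWindingNumber {u : ℝ → ℂ} (huc : Continuous u) (hup : Periodic u 1)
    (hne : ∀ t, u t ≠ 0) : ∃ n : ℤ, HasWindingNumber u n := by
  obtain ⟨L, hL, hexp⟩ := exists_continuous_exp_eq huc hne
  have hu10 : exp (L 1) = exp (L 0) := by simpa [hexp] using hup 0
  obtain ⟨n, hn⟩ := exp_eq_exp_iff_exists_int.mp hu10
  exact ⟨n, (hasWindingNumber_iff_of_exp_eq hup hL hexp).mpr (by rw [hn]; ring)⟩

theorem HasWindingNumber.unique {u : ℝ → ℂ} {n m : ℤ} (hn : HasWindingNumber u n)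
    (hm : HasWindingNumber u m) : n = m := by
  obtain ⟨huc, hup, hne, -⟩ := id hn
  obtain ⟨L, hL, hexp⟩ := exists_continuous_exp_eq huc hne
  have h := ((hasWindingNumber_iff_of_exp_eq hup hL hexp).mp hn).symm.trans
    ((hasWindingNumber_iff_of_exp_eq hup hL hexp).mp hm)
  have h2πI : 2 * (π : ℂ) * I ≠ 0 := by simp [Real.pi_ne_zero]
  exact_mod_cast mul_left_cancel₀ h2πI h

theorem HasWindingNumber.of_homotopy {F : ℝ → ℝ → ℂ} (hF : Continuous (uncurry F))
    (hper : ∀ s, Periodic (F s) 1) (hne : ∀ s t, F s t ≠ 0) {a b : ℝ} {n : ℤ}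
    (ha : HasWindingNumber (F a) n) : HasWindingNumber (F b) n := by
  obtain ⟨L, hL, hexp⟩ := exists_continuous_exp_eq hF fun p => hne p.1 p.2
  have hLs : ∀ s, Continuous fun t => L (s, t) := fun s => hL.comp (Continuous.prodMk_right s)
  have hends : ∀ s, exp (L (s, 1)) = exp (L (s, 0)) := fun s => by
    simpa [hexp] using hper s 0
  have := sub_eq_sub_of_exp_eq (hL.comp (Continuous.prodMk_left 1))
    (hL.comp (Continuous.prodMk_left 0)) hends a b
  rw [hasWindingNumber_iff_of_exp_eq (hper a) (hLs a) fun t => hexp (a, t)] at ha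
  rw [hasWindingNumber_iff_of_exp_eq (hper b) (hLs b) fun t => hexp (b, t)]
  simpa [ha] using this.symm

theorem HasWindingNumber.add_one_of_exp_eq {u L : ℝ → ℂ} {n : ℤ} (hu : HasWindingNumber u n)
    (hL : Continuous L) (hexp : ∀ t, exp (L t) = u t) (t : ℝ) :
    L (t + 1) = L t + 2 * π * I * n := by
  have h10 := (hasWindingNumber_iff_of_exp_eq hu.2.1 hL hexp).mp hu
  have := sub_eq_sub_of_exp_eq (hL.comp (continuous_add_const 1)) hL
    (fun t => by simp only [comp_apply, hexp, hu.2.1 t]) t 0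
  simp only [comp_apply, zero_add] at this
  linear_combination this + h10

theorem HasWindingNumber.comp_injective {f : ℂ → ℂ} (hf : Continuous f) (hinj : Injective f)
    {γ : ℝ → ℂ} {z : ℂ} {n m : ℤ} (hγ : HasWindingNumber (fun t => γ t - z) n)
    (hfγ : HasWindingNumber (fun t => f (γ t) - f z) m) :
    HasWindingNumber (fun t => f (z + exp (2 * π * I * (n * t))) - f z) m := by
  obtain ⟨L, hL, hexp⟩ := exists_continuous_exp_eq hγ.1 hγ.2.2.1
  set F : ℝ → ℝ → ℂ := fun s t => f (z + exp ((1 - s) * L t + s * (2 * π * I * (n * t)))) - f z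
  have hF : Continuous (uncurry F) := by
    simp only [F, uncurry_def]
    fun_prop
  have hper : ∀ s, Periodic (F s) 1 := fun s t => by
    simp only [F, hγ.add_one_of_exp_eq hL hexp t]
    congr 3
    exact exp_eq_exp_iff_exists_int.mpr ⟨n, by push_cast; ring⟩
  have hne : ∀ s t, F s t ≠ 0 := fun s t => by
    simp [F, sub_eq_zero, hinj.eq_iff, exp_ne_zero]
  have h0 : F 0 = fun t => f (γ t) - f z := funext fun t => by simp [F, hexp]
  have h1 : F 1 = fun t : ℝ => f (z + exp (2 * π * I * (n * t))) - f z := funext fun t => by simp [F]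
  exact h1 ▸ HasWindingNumber.of_homotopy hF hper hne (h0 ▸ hfγ)

theorem hasWindingNumber_const {c : ℂ} (hc : c ≠ 0) : HasWindingNumber (fun _ => c) 0 :=
  (hasWindingNumber_iff_of_exp_eq (fun _ => rfl) continuous_const fun _ => exp_log hc).mpr
    (by simp)

theorem periodic_exp_two_pi_I_mul : Periodic (fun t : ℝ => exp (2 * π * I * t)) 1 := fun t =>
  exp_eq_exp_iff_exists_int.mpr ⟨1, by push_cast; ring⟩

theorem hasWindingNumber_exp_two_pi_I_mul :
    HasWindingNumber (fun t : ℝ => exp (2 * π * I * t)) 1 :=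
  (hasWindingNumber_iff_of_exp_eq periodic_exp_two_pi_I_mul (by fun_prop) fun _ => rfl).mpr
    (by simp)

theorem HasWindingNumber.recenter_image_circle {f : ℂ → ℂ} (hf : Continuous f)
    (hinj : Injective f) {ε : ℤ} {z : ℂ}
    (hz : HasWindingNumber (fun t => f (z + exp (2 * π * I * t)) - f z) ε) (z' : ℂ) :
    HasWindingNumber (fun t => f (z' + exp (2 * π * I * t)) - f z') ε := by
  set F : ℝ → ℝ → ℂ := fun s t =>
    f (z + s * (z' - z) + exp (2 * π * I * t)) - f (z + s * (z' - z))
  have hF : Continuous (uncurry F) := by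
    simp only [F, uncurry_def]
    fun_prop
  have hper : ∀ s, Periodic (F s) 1 := fun s t => by simp only [F, periodic_exp_two_pi_I_mul t]
  have hne : ∀ s t, F s t ≠ 0 := fun s t => by
    simp [F, sub_eq_zero, hinj.eq_iff, exp_ne_zero]
  simpa [F] using HasWindingNumber.of_homotopy hF hper hne (a := 0) (b := 1) (by simpa [F])

theorem Homeomorph.circle_winding_ne_zero (h : ℂ ≃ₜ ℂ) {z : ℂ} {ε : ℤ}
    (hε : HasWindingNumber (fun t => h (z + exp (2 * π * I * t)) - h z) ε) : ε ≠ 0 := by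
  rintro rfl
  have hsymm := HasWindingNumber.comp_injective h.symm.continuous h.symm.injective hε
    (m := 1) (by simpa using hasWindingNumber_exp_two_pi_I_mul)
  have hconst : HasWindingNumber (fun _ => h.symm (h z + 1) - z) 0 :=
    hasWindingNumber_const (by simp [sub_eq_zero, h.symm_apply_eq])
  exact zero_ne_one (hconst.unique (by simpa using hsymm))

theorem Homeomorph.exists_winding_eq (h : ℂ ≃ₜ ℂ) :
    ∃ ε : ℤ, ε ≠ 0 ∧ ∀ (γ : ℝ → ℂ) (z : ℂ) (n : ℤ), HasWindingNumber (fun t => γ t - z) 1 →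
      HasWindingNumber (fun t => h (γ t) - h z) n → n = ε := by
  obtain ⟨ε, hε⟩ := exists_hasWindingNumber (u := fun t => h (0 + exp (2 * π * I * t)) - h 0)
    (by fun_prop) (fun t => by simp only [periodic_exp_two_pi_I_mul t])
    (fun t => by simp [sub_eq_zero, exp_ne_zero])
  refine ⟨ε, h.circle_winding_ne_zero hε, fun γ z n hγ hn => ?_⟩
  have hcirc : HasWindingNumber (fun t => h (z + exp (2 * π * I * t)) - h z) n := by
    simpa using HasWindingNumber.comp_injective h.continuous h.injective hγ hn
  exact hcirc.unique (hε.recenter_image_circle h.continuous h.injective z)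

/-- Every homeomorphism of the plane onto itself is either positively or
negatively oriented. -/
theorem homeomorph_pos_or_neg_oriented (h : ℂ ≃ₜ ℂ) :
    PositivelyOriented h ∨ NegativelyOriented h := by
  obtain ⟨ε, hε, hwind⟩ := h.exists_winding_eq
  have hwin : ∀ γ, PosParam γ → ∀ w ∈ h '' topHull (range γ) \ h '' range γ,
      ∀ n, Win h γ w n → n = ε := by
    rintro γ ⟨-, hγ⟩ w ⟨⟨z, hz, rfl⟩, hw⟩ n hn
    exact hwind γ z n (hγ z ⟨hz, fun hzγ => hw (mem_image_of_mem h hzγ)⟩) hn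
  rcases hε.lt_or_gt with hneg | hpos
  · exact .inr fun γ hγ w hw n hn => hwin γ hγ w hw n hn ▸ hneg
  · exact .inl fun γ hγ w hw n hn => hwin γ hγ w hw n hn ▸ hpos
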